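/- The Fourier conjugate of the Legendre operator satisfies ℱ L ℱ^{-1} = -|p|²(1+Δ) - 2 p·∇ on Schwartz functions; equivalently ℱ L ℱ^{-1} = L - (Δ + 1) + M, where M is multiplication by (1-|p|²). -/

import Mathlib

open MeasureTheory Filter Topology
noncomputable section

/-- Euclidean space ℝ^d. -/
abbrev Ed (d : ℕ) := EuclideanSpace ℝ (Fin d)

/-- Partial derivative ∂ᵢ of a complex-valued function. -/
def pd {d : ℕ} (i : Fin d) (f : Ed d → ℂ) (x : Ed d) : ℂ :=
  fderiv ℝ f x (EuclideanSpace.single i 1)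

/-- Laplacian Δ = ∑ᵢ ∂ᵢ². -/
def lap {d : ℕ} (f : Ed d → ℂ) (x : Ed d) : ℂ := ∑ i, pd i (pd i f) x

/-- Radial derivative r∂ᵣ = ∑ᵢ xᵢ ∂ᵢ. -/
def rdr {d : ℕ} (f : Ed d → ℂ) (x : Ed d) : ℂ := ∑ i, (x i : ℂ) * pd i f x

/-- Legendre operator L f = ∇·((1-|x|²)∇f). -/
def legendreOp {d : ℕ} (f : Ed d → ℂ) (x : Ed d) : ℂ :=
  ∑ i, pd i (fun y => ((1 - ‖y‖ ^ 2 : ℝ) : ℂ) * pd i f y) x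

/-- Prolate operator W f = L f - |x|² f. -/
def prolateOp {d : ℕ} (f : Ed d → ℂ) (x : Ed d) : ℂ :=
  legendreOp f x - ((‖x‖ ^ 2 : ℝ) : ℂ) * f x

/-- The Fourier transform ℱf(p) = (2π)^{-d/2} ∫ e^{-i x·p} f(x) dx. -/
def FT {d : ℕ} (f : Ed d → ℂ) (p : Ed d) : ℂ :=
  (((2 * Real.pi) ^ (-(d : ℝ) / 2) : ℝ) : ℂ) *
    ∫ x : Ed d, Complex.exp (-Complex.I * ((inner ℝ x p : ℝ) : ℂ)) * f x

/-!
Write `∂ᵢ` and `xᵢ` for differentiation and coordinate multiplication on `𝓢(ℝᵈ, ℂ)`, and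
`Q = ∑ᵢⱼ ∂ᵢ xⱼ xⱼ ∂ᵢ = ∇·(|x|²∇)`, so that `L = Δ - Q`. Conjugation by `ℱ` turns `∂ᵢ` into `i xᵢ`
and `xⱼ` into `i ∂ⱼ`; hence `ℱ Δ ℱ⁻¹ = -|p|²` and `ℱ Q ℱ⁻¹ = ∑ᵢⱼ xᵢ ∂ⱼ ∂ⱼ xᵢ`. Since
`[∂ⱼ, xᵢ] = δᵢⱼ`, both `xᵢ ∂ⱼ ∂ⱼ xᵢ` and `∂ⱼ xᵢ xᵢ ∂ⱼ` equal `xᵢ ∂ⱼ xᵢ ∂ⱼ + δᵢⱼ xᵢ ∂ⱼ`, so `ℱ`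
commutes with `Q`. Therefore `ℱ L ℱ⁻¹ = -|p|² - Q = L - Δ - |p|²`. All of this is computed in the
ring of continuous linear operators on `𝓢(ℝᵈ, ℂ)`.
-/

open SchwartzMap LineDeriv FourierTransform Complex
open scoped SchwartzMap RealInnerProductSpace

theorem mul_mul_mul_eq_of_mul_eq_add_central {R : Type*} [Ring R] {x y c : R}
    (h : y * x = x * y + c) (hx : Commute c x) (hy : Commute c y) :
    x * y * y * x = y * x * x * y := by
  calc x * y * y * x = x * y * (y * x) := by simp only [mul_assoc]
    _ = x * y * (x * y) + x * y * c := by rw [h, mul_add]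
    _ = x * y * (x * y) + c * (x * y) := by rw [(hx.mul_right hy).eq]
    _ = (x * y + c) * (x * y) := by rw [add_mul]
    _ = y * x * x * y := by rw [← h]; simp only [mul_assoc]

variable {d : ℕ}

def partialCLM (i : Fin d) : 𝓢(Ed d, ℂ) →L[ℂ] 𝓢(Ed d, ℂ) :=
  lineDerivOpCLM ℂ 𝓢(Ed d, ℂ) (EuclideanSpace.single i (1 : ℝ))

def coordMulCLM (i : Fin d) : 𝓢(Ed d, ℂ) →L[ℂ] 𝓢(Ed d, ℂ) :=
  smulLeftCLM ℂ (fun x : Ed d => ((x i : ℝ) : ℂ))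

def normSqMulCLM : 𝓢(Ed d, ℂ) →L[ℂ] 𝓢(Ed d, ℂ) := ∑ j, coordMulCLM j * coordMulCLM j

def lapCLM : 𝓢(Ed d, ℂ) →L[ℂ] 𝓢(Ed d, ℂ) := ∑ i, partialCLM i * partialCLM i

def legendreCLM : 𝓢(Ed d, ℂ) →L[ℂ] 𝓢(Ed d, ℂ) :=
  ∑ i, partialCLM i * (1 - normSqMulCLM) * partialCLM i

def divNormSqGradCLM : 𝓢(Ed d, ℂ) →L[ℂ] 𝓢(Ed d, ℂ) :=
  ∑ i, partialCLM i * normSqMulCLM * partialCLM i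

lemma legendreCLM_eq_lapCLM_sub : legendreCLM = lapCLM - divNormSqGradCLM (d := d) := by
  simp only [legendreCLM, lapCLM, divNormSqGradCLM, mul_sub, sub_mul, mul_one,
    Finset.sum_sub_distrib]

lemma coordMulCLM_apply (i : Fin d) (g : 𝓢(Ed d, ℂ)) (x : Ed d) :
    coordMulCLM i g x = x i * g x := by
  have : (fun x : Ed d => ((x i : ℝ) : ℂ)).HasTemperateGrowth :=
    (ofRealCLM.comp (EuclideanSpace.proj i : Ed d →L[ℝ] ℝ)).hasTemperateGrowth
  simp [coordMulCLM, this]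

lemma normSqMulCLM_apply (g : 𝓢(Ed d, ℂ)) (x : Ed d) :
    normSqMulCLM g x = ((‖x‖ ^ 2 : ℝ) : ℂ) * g x := by
  have : ((‖x‖ ^ 2 : ℝ) : ℂ) = ∑ j, (x j : ℂ) * x j := by
    rw [EuclideanSpace.real_norm_sq_eq]; push_cast; simp only [sq]
  simp [normSqMulCLM, coordMulCLM_apply, this, Finset.sum_mul, mul_assoc]

lemma pd_coe (i : Fin d) (g : 𝓢(Ed d, ℂ)) : pd i ⇑g = ⇑(partialCLM i g) := rfl

lemma lap_coe (g : 𝓢(Ed d, ℂ)) : lap ⇑g = ⇑(lapCLM g) := by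
  ext x
  simp only [lap, lapCLM, pd_coe, sum_apply, mul_apply_eq_comp]

lemma legendreOp_coe (g : 𝓢(Ed d, ℂ)) : legendreOp ⇑g = ⇑(legendreCLM g) := by
  ext x
  have (i : Fin d) : (fun y => ((1 - ‖y‖ ^ 2 : ℝ) : ℂ) * partialCLM i g y) =
      ⇑((1 - normSqMulCLM) (partialCLM i g)) := by
    ext y
    simp [normSqMulCLM_apply, sub_mul]
  simp only [legendreOp, this, pd_coe, legendreCLM, sum_apply, mul_apply_eq_comp]

lemma partialCLM_mul_coordMulCLM (i j : Fin d) :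
    partialCLM i * coordMulCLM j = coordMulCLM j * partialCLM i + if i = j then 1 else 0 := by
  ext g x
  have hg : ⇑(coordMulCLM j g) = fun y => ((y j : ℝ) : ℂ) * g y := funext (coordMulCLM_apply j g)
  have hc : fderiv ℝ (fun y : Ed d => ((y j : ℝ) : ℂ)) x =
      ofRealCLM.comp (EuclideanSpace.proj j : Ed d →L[ℝ] ℝ) :=
    (ofRealCLM.comp (EuclideanSpace.proj j : Ed d →L[ℝ] ℝ)).fderiv
  simp only [mul_apply_eq_comp, add_apply, partialCLM,
    lineDerivOpCLM_apply, lineDerivOp_apply_eq_fderiv, hg]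
  rw [fderiv_fun_mul (by fun_prop) g.differentiableAt, hc]
  split_ifs with h
  · subst h; simp [coordMulCLM_apply, lineDerivOp_apply_eq_fderiv, add_comm]
  · simp [coordMulCLM_apply, lineDerivOp_apply_eq_fderiv, Ne.symm h]

def invTwoPiSMulEquiv (d : ℕ) : Ed d ≃L[ℝ] Ed d :=
  ContinuousLinearEquiv.smulLeft (Units.mk0 ((2 * Real.pi)⁻¹) (by positivity))

lemma invTwoPiSMulEquiv_apply (p : Ed d) : invTwoPiSMulEquiv d p = (2 * Real.pi)⁻¹ • p := rfl

def scaledFourierCLM (d : ℕ) : 𝓢(Ed d, ℂ) →L[ℂ] 𝓢(Ed d, ℂ) :=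
  (((2 * Real.pi) ^ (-(d : ℝ) / 2) : ℝ) : ℂ) •
    (compCLMOfContinuousLinearEquiv ℂ (invTwoPiSMulEquiv d) ∘L fourierTransformCLM ℂ)

lemma scaledFourierCLM_apply (g : 𝓢(Ed d, ℂ)) (p : Ed d) :
    scaledFourierCLM d g p =
      (((2 * Real.pi) ^ (-(d : ℝ) / 2) : ℝ) : ℂ) * 𝓕 (⇑g) ((2 * Real.pi)⁻¹ • p) := by
  simp [scaledFourierCLM, invTwoPiSMulEquiv_apply, fourier_coe]

lemma FT_coe (g : 𝓢(Ed d, ℂ)) : FT ⇑g = ⇑(scaledFourierCLM d g) := by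
  ext p
  rw [scaledFourierCLM_apply, FT, Real.fourier_eq']
  congr 1
  refine integral_congr_ae (Eventually.of_forall fun x => ?_)
  have : -2 * Real.pi * ⟪x, (2 * Real.pi)⁻¹ • p⟫ = -⟪x, p⟫ := by
    rw [real_inner_smul_right]; field_simp
  simp only [smul_eq_mul, this]
  push_cast
  ring_nf

lemma smulLeftCLM_inner_single (i : Fin d) (g : 𝓢(Ed d, ℂ)) :
    smulLeftCLM ℂ (fun x : Ed d => ⟪x, EuclideanSpace.single i (1 : ℝ)⟫) g = coordMulCLM i g := by
  have : (fun x : Ed d => ⟪x, EuclideanSpace.single i (1 : ℝ)⟫).HasTemperateGrowth := by fun_prop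
  ext x
  rw [smulLeftCLM_apply_apply this, coordMulCLM_apply, EuclideanSpace.inner_single_right]
  simp [Complex.real_smul]

lemma scaledFourierCLM_mul_partialCLM (i : Fin d) :
    scaledFourierCLM d * partialCLM i = I • (coordMulCLM i * scaledFourierCLM d) := by
  ext g p
  simp only [mul_apply_eq_comp, _root_.smul_apply]
  simp [scaledFourierCLM_apply, coordMulCLM_apply, partialCLM, ← fourier_coe,
    fourier_lineDerivOp_eq, smulLeftCLM_inner_single]
  field_simp

lemma partialCLM_mul_scaledFourierCLM (i : Fin d) :
    partialCLM i * scaledFourierCLM d = -I • (scaledFourierCLM d * coordMulCLM i) := by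
  ext1 g
  simp only [scaledFourierCLM, partialCLM]
  simp [lineDerivOp_compCLMOfContinuousLinearEquiv, invTwoPiSMulEquiv_apply,
    lineDerivOp_left_smul, lineDerivOp_fourier_eq, smulLeftCLM_inner_single, smul_smul,
    ← Complex.coe_smul]
  congr 1
  field_simp

lemma scaledFourierCLM_mul_coordMulCLM (i : Fin d) :
    scaledFourierCLM d * coordMulCLM i = I • (partialCLM i * scaledFourierCLM d) := by
  rw [partialCLM_mul_scaledFourierCLM, smul_smul]
  simp

lemma scaledFourierCLM_mul_lapCLM :
    scaledFourierCLM d * lapCLM = -(normSqMulCLM * scaledFourierCLM d) := by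
  simp only [lapCLM, normSqMulCLM, Finset.mul_sum, Finset.sum_mul, ← Finset.sum_neg_distrib]
  refine Finset.sum_congr rfl fun i _ => ?_
  rw [← mul_assoc, scaledFourierCLM_mul_partialCLM, smul_mul_assoc, mul_assoc,
    scaledFourierCLM_mul_partialCLM, mul_smul_comm, smul_smul, ← mul_assoc, I_mul_I, neg_one_smul]

lemma scaledFourierCLM_mul_divNormSqGradCLM :
    scaledFourierCLM d * divNormSqGradCLM = divNormSqGradCLM * scaledFourierCLM d := by
  have hD (i : Fin d) (T : 𝓢(Ed d, ℂ) →L[ℂ] 𝓢(Ed d, ℂ)) :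
      scaledFourierCLM d * (partialCLM i * T) = I • (coordMulCLM i * (scaledFourierCLM d * T)) := by
    rw [← mul_assoc, scaledFourierCLM_mul_partialCLM, smul_mul_assoc, mul_assoc]
  have hX (i : Fin d) (T : 𝓢(Ed d, ℂ) →L[ℂ] 𝓢(Ed d, ℂ)) :
      scaledFourierCLM d * (coordMulCLM i * T) = I • (partialCLM i * (scaledFourierCLM d * T)) := by
    rw [← mul_assoc, scaledFourierCLM_mul_coordMulCLM, smul_mul_assoc, mul_assoc]
  have hterm (i j : Fin d) :
      scaledFourierCLM d * (partialCLM i * coordMulCLM j * coordMulCLM j * partialCLM i) =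
        partialCLM j * coordMulCLM i * coordMulCLM i * partialCLM j * scaledFourierCLM d := by
    rw [← mul_mul_mul_eq_of_mul_eq_add_central (partialCLM_mul_coordMulCLM j i)
      (by split_ifs <;> simp) (by split_ifs <;> simp)]
    simp only [mul_assoc, hD, hX, scaledFourierCLM_mul_partialCLM, mul_smul_comm, smul_smul]
    simp [← pow_two]
  calc scaledFourierCLM d * divNormSqGradCLM
      = ∑ i, ∑ j, scaledFourierCLM d *
          (partialCLM i * coordMulCLM j * coordMulCLM j * partialCLM i) := by
        simp only [divNormSqGradCLM, normSqMulCLM, Finset.mul_sum, Finset.sum_mul, mul_assoc]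
    _ = ∑ i, ∑ j, partialCLM j * coordMulCLM i * coordMulCLM i * partialCLM j *
          scaledFourierCLM d := by
        simp only [hterm]
    _ = divNormSqGradCLM * scaledFourierCLM d := by
        rw [Finset.sum_comm]
        simp only [divNormSqGradCLM, normSqMulCLM, Finset.mul_sum, Finset.sum_mul, mul_assoc]

theorem fourier_legendre (d : ℕ) (f : SchwartzMap (Ed d) ℂ) (p : Ed d) :
    FT (legendreOp (⇑f)) p =
      legendreOp (FT (⇑f)) p - (lap (FT (⇑f)) p + FT (⇑f) p)
        + ((1 - ‖p‖ ^ 2 : ℝ) : ℂ) * FT (⇑f) p := by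
  have key : scaledFourierCLM d * legendreCLM =
      (legendreCLM - lapCLM - 1 + (1 - normSqMulCLM)) * scaledFourierCLM d := by
    rw [legendreCLM_eq_lapCLM_sub, mul_sub, scaledFourierCLM_mul_lapCLM,
      scaledFourierCLM_mul_divNormSqGradCLM]
    noncomm_ring
  have hf := congr($key f p)
  simp only [mul_apply_eq_comp, add_apply, sub_apply, one_apply_eq_self, normSqMulCLM_apply] at hf
  rw [legendreOp_coe, FT_coe, FT_coe, legendreOp_coe, lap_coe, hf]
  push_cast
  ring
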